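/- Let G be an n-vertex d-regular graph with adjacency matrix A and Ã = A/d. Suppose G contains an independent set I of size (1/2 − γ)n for some 0 < γ < 1/4, and that Ã has at most t eigenvalues ≤ −λ for some 0 < λ < 1. Let u ∈ ℝⁿ have u_x = 1/√n for x ∈ I and u_x = −1/√n otherwise. Then the orthogonal projection Pu of u to the span of the bottom t eigenvectors of Ã satisfies ‖u − Pu‖² ≤ 4γ/(1 − λ). -/

import Mathlib

/-!
The sign vector `u` of `I` is a unit vector, and since an independent set of a `d`-regular graph
sends all of its `d |I|` edges across the cut, `⟨u, Ãu⟩ = 4γ - 1`. Expanding `u = ∑ c_j w_j` in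
the eigenbasis gives `⟨u, (1 + Ã) u⟩ = ∑ (1 + ν_j) c_j²`. Every `ν_j ≥ -1` by Gershgorin, and
`ν_j > -λ` off the bottom eigenvalues, so `(1 - λ) ‖u - Pu‖² = (1 - λ) ∑_{j ∉ T} c_j² ≤ 4γ`.
-/

open Matrix Finset
open scoped Classical

section Orthonormal

variable {ι : Type*} [Fintype ι] [DecidableEq ι] {w : ι → ι → ℝ}

theorem sum_dotProduct_smul_eq_self_of_orthonormal
    (hw : ∀ i j, w i ⬝ᵥ w j = if i = j then 1 else 0) (v : ι → ℝ) :
    ∑ j, (w j ⬝ᵥ v) • w j = v := by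
  have hWWt : of w * (of w)ᵀ = 1 := by
    ext i j
    simpa [mul_apply, one_apply, dotProduct] using hw i j
  calc ∑ j, (w j ⬝ᵥ v) • w j = v ᵥ* (of w)ᵀ ᵥ* of w := by
        rw [vecMul_transpose, vecMul_eq_sum]; rfl
    _ = v := by rw [vecMul_vecMul, mul_eq_one_comm.mp hWWt, vecMul_one]

theorem sum_smul_dotProduct_sum_smul_of_orthonormal
    (hw : ∀ i j, w i ⬝ᵥ w j = if i = j then 1 else 0) (S : Finset ι) (c : ι → ℝ) :
    (∑ j ∈ S, c j • w j) ⬝ᵥ (∑ j ∈ S, c j • w j) = ∑ j ∈ S, c j ^ 2 := by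
  simp_rw [sum_dotProduct, dotProduct_sum, smul_dotProduct, dotProduct_smul, hw, smul_eq_mul,
    mul_ite, mul_one, mul_zero, sum_ite_eq]
  exact sum_congr rfl fun j hj => by rw [if_pos hj, sq]

theorem dotProduct_mulVec_eq_sum_of_orthonormal
    (hw : ∀ i j, w i ⬝ᵥ w j = if i = j then 1 else 0) {M : Matrix ι ι ℝ} {ν : ι → ℝ}
    (hM : ∀ j, M *ᵥ w j = ν j • w j) (v : ι → ℝ) :
    v ⬝ᵥ M *ᵥ v = ∑ j, ν j * (w j ⬝ᵥ v) ^ 2 := by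
  conv_lhs => enter [2, 2]; rw [← sum_dotProduct_smul_eq_self_of_orthonormal hw v]
  simp_rw [mulVec_sum, mulVec_smul, hM, smul_smul, dotProduct_sum, dotProduct_smul,
    dotProduct_comm v, smul_eq_mul]
  exact sum_congr rfl fun j _ => by ring

theorem sub_sum_vecMulVec_mulVec_of_orthonormal
    (hw : ∀ i j, w i ⬝ᵥ w j = if i = j then 1 else 0) (T : Finset ι) (v : ι → ℝ) :
    v - (∑ j ∈ T, vecMulVec (w j) (w j)) *ᵥ v = ∑ j ∈ univ \ T, (w j ⬝ᵥ v) • w j := by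
  conv_lhs => enter [1]; rw [← sum_dotProduct_smul_eq_self_of_orthonormal hw v]
  simp_rw [← sum_sdiff (subset_univ T), sum_mulVec, vecMulVec_mulVec, op_smul_eq_smul,
    add_sub_cancel_right]

end Orthonormal

theorem one_sub_mul_sum_sdiff_le {ι : Type*} [Fintype ι] [DecidableEq ι] (T : Finset ι) {lam : ℝ}
    {p ν : ι → ℝ} (hp : ∀ j, 0 ≤ p j) (hν : ∀ j, -1 ≤ ν j) (hout : ∀ j ∉ T, -lam ≤ ν j) :
    (1 - lam) * ∑ j ∈ univ \ T, p j ≤ ∑ j, (1 + ν j) * p j := by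
  rw [← sum_sdiff (subset_univ T), mul_sum]
  have hT : 0 ≤ ∑ j ∈ T, (1 + ν j) * p j :=
    sum_nonneg fun j _ => mul_nonneg (by linarith [hν j]) (hp j)
  have hTc : ∑ j ∈ univ \ T, (1 - lam) * p j ≤ ∑ j ∈ univ \ T, (1 + ν j) * p j :=
    sum_le_sum fun j hj => mul_le_mul_of_nonneg_right
      (by linarith [hout j (mem_sdiff.mp hj).2]) (hp j)
  linarith

def Finset.signIndicator {V : Type*} [DecidableEq V] (I : Finset V) : V → ℝ :=
  fun x => if x ∈ I then 1 else -1

theorem Finset.signIndicator_dotProduct_self {V : Type*} [Fintype V] [DecidableEq V]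
    (I : Finset V) : I.signIndicator ⬝ᵥ I.signIndicator = Fintype.card V := by
  have hsq : ∀ x, I.signIndicator x * I.signIndicator x = 1 := fun x => by
    by_cases hx : x ∈ I <;> simp [signIndicator, hx]
  simp [dotProduct, hsq]

namespace SimpleGraph

variable {V : Type*} [Fintype V] [DecidableEq V] {G : SimpleGraph V} [DecidableRel G.Adj] {d : ℕ}

theorem IsRegularOfDegree.abs_le_one_of_mulVec_eq_smul (hreg : G.IsRegularOfDegree d)
    {v : V → ℝ} (hv : v ≠ 0) {μ : ℝ} (h : ((d : ℝ)⁻¹ • G.adjMatrix ℝ) *ᵥ v = μ • v) :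
    |μ| ≤ 1 := by
  have hμ : Module.End.HasEigenvalue (toLin' ((d : ℝ)⁻¹ • G.adjMatrix ℝ)) μ :=
    Module.End.hasEigenvalue_of_hasEigenvector
      ⟨by rwa [Module.End.mem_eigenspace_iff, toLin'_apply], hv⟩
  obtain ⟨k, hk⟩ := eigenvalue_mem_ball hμ
  simp only [Matrix.smul_apply, adjMatrix_apply, SimpleGraph.irrefl, ↓reduceIte, smul_eq_mul,
    mul_zero, mul_ite, mul_one, Real.norm_eq_abs, mem_univ, sum_erase_eq_sub, abs_zero, sub_zero,
    Metric.mem_closedBall, dist_zero_right] at hk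
  refine hk.trans ?_
  simp only [apply_ite abs, abs_zero, abs_inv, Nat.abs_cast, sum_ite, sum_const_zero, add_zero,
    sum_const, nsmul_eq_mul, ← neighborFinset_eq_filter, card_neighborFinset_eq_degree, hreg k]
  exact mul_inv_le_one

theorem IsRegularOfDegree.signIndicator_dotProduct_adjMatrix_mulVec
    (hreg : G.IsRegularOfDegree d) {I : Finset V} (hI : G.IsIndepSet I) :
    I.signIndicator ⬝ᵥ G.adjMatrix ℝ *ᵥ I.signIndicator = d * (Fintype.card V - 4 * #I) := by
  set f : V → ℝ := fun x => if x ∈ I then 1 else 0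
  have hs : I.signIndicator = (2 : ℝ) • f - 1 := by
    funext x
    by_cases hx : x ∈ I <;> norm_num [signIndicator, f, hx]
  have hA1 : G.adjMatrix ℝ *ᵥ 1 = (d : ℝ) • 1 := by
    funext x
    simp [hreg x]
  have hAsymm : 1 ⬝ᵥ G.adjMatrix ℝ *ᵥ f = f ⬝ᵥ G.adjMatrix ℝ *ᵥ 1 := by
    rw [dotProduct_mulVec, ← mulVec_transpose, transpose_adjMatrix, dotProduct_comm]
  have hff : f ⬝ᵥ G.adjMatrix ℝ *ᵥ f = 0 := by
    refine sum_eq_zero fun x _ => ?_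
    by_cases hx : x ∈ I
    · rw [adjMatrix_mulVec_apply, sum_eq_zero, mul_zero]
      intro y hy
      have hxy := (mem_neighborFinset G x y).mp hy
      exact if_neg fun hyI => hI (mem_coe.mpr hx) (mem_coe.mpr hyI) hxy.ne hxy
    · simp [f, hx]
  have hf1 : f ⬝ᵥ 1 = #I := by
    simp [f, dotProduct_one]
  rw [hs]
  simp only [mulVec_sub, mulVec_smul, dotProduct_sub, sub_dotProduct, smul_dotProduct,
    dotProduct_smul, hff, hAsymm, hA1, hf1, one_dotProduct_one]
  simp only [smul_eq_mul]
  ring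

theorem IsRegularOfDegree.signIndicator_dotProduct_one_add_mulVec
    (hreg : G.IsRegularOfDegree d) (hd : 0 < d) {I : Finset V} (hI : G.IsIndepSet I) :
    I.signIndicator ⬝ᵥ (1 + (d : ℝ)⁻¹ • G.adjMatrix ℝ) *ᵥ I.signIndicator
      = 2 * (Fintype.card V - 2 * #I) := by
  rw [add_mulVec, one_mulVec, smul_mulVec, dotProduct_add, dotProduct_smul, smul_eq_mul,
    I.signIndicator_dotProduct_self, hreg.signIndicator_dotProduct_adjMatrix_mulVec hI]
  field_simp
  ring

end SimpleGraph

theorem stmt13_general {n d : ℕ} (G : SimpleGraph (Fin n)) [DecidableRel G.Adj]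
    (hreg : G.IsRegularOfDegree d) (hd : 0 < d)
    (γ lam : ℝ) (hγ0 : 0 < γ) (hlam1 : lam < 1)
    (I : Finset (Fin n)) (hind : ∀ x ∈ I, ∀ y ∈ I, ¬ G.Adj x y)
    (hIcard : (I.card : ℝ) = (1 / 2 - γ) * n)
    (w : Fin n → Fin n → ℝ) (ν : Fin n → ℝ)
    (hortho : ∀ i j, w i ⬝ᵥ w j = if i = j then 1 else 0)
    (heig : ∀ j, ((d : ℝ)⁻¹ • G.adjMatrix ℝ).mulVec (w j) = ν j • w j)
    (T : Finset (Fin n))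
    (hout : ∀ j ∉ T, -lam < ν j)
    (u : Fin n → ℝ)
    (hu : u = fun x => if x ∈ I then 1 / Real.sqrt n else -(1 / Real.sqrt n))
    (P : Matrix (Fin n) (Fin n) ℝ)
    (hP : P = ∑ j ∈ T, Matrix.vecMulVec (w j) (w j)) :
    (u - P.mulVec u) ⬝ᵥ (u - P.mulVec u) ≤ 4 * γ / (1 - lam) := by
  set c : Fin n → ℝ := fun j => w j ⬝ᵥ u
  have hν : ∀ j, -1 ≤ ν j := fun j =>
    (abs_le.mp (hreg.abs_le_one_of_mulVec_eq_smul
      (fun h0 => by simpa [h0] using hortho j j) (heig j))).1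
  have hus : u = (Real.sqrt n)⁻¹ • I.signIndicator := by
    funext x
    by_cases hx : x ∈ I <;> simp [hu, Finset.signIndicator, hx]
  have hquad : u ⬝ᵥ (1 + (d : ℝ)⁻¹ • G.adjMatrix ℝ) *ᵥ u ≤ 4 * γ := calc
    _ = (Real.sqrt n)⁻¹ ^ 2 *
          (I.signIndicator ⬝ᵥ (1 + (d : ℝ)⁻¹ • G.adjMatrix ℝ) *ᵥ I.signIndicator) := by
      rw [hus, mulVec_smul, dotProduct_smul, smul_dotProduct, smul_eq_mul, smul_eq_mul]
      ring
    _ = 4 * γ * (n / n) := by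
      rw [inv_pow, Real.sq_sqrt (Nat.cast_nonneg n),
        hreg.signIndicator_dotProduct_one_add_mulVec hd fun x hx y hy _ => hind x hx y hy,
        Fintype.card_fin, hIcard]
      ring
    _ ≤ 4 * γ := mul_le_of_le_one_right (by positivity) (div_self_le_one _)
  have hspec : u ⬝ᵥ (1 + (d : ℝ)⁻¹ • G.adjMatrix ℝ) *ᵥ u = ∑ j, (1 + ν j) * c j ^ 2 :=
    dotProduct_mulVec_eq_sum_of_orthonormal hortho
      (fun j => by rw [add_mulVec, one_mulVec, heig j, add_smul, one_smul]) u
  rw [hP, sub_sum_vecMulVec_mulVec_of_orthonormal hortho,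
    sum_smul_dotProduct_sum_smul_of_orthonormal hortho, le_div_iff₀ (sub_pos.mpr hlam1), mul_comm]
  calc (1 - lam) * ∑ j ∈ univ \ T, c j ^ 2 ≤ ∑ j, (1 + ν j) * c j ^ 2 :=
        one_sub_mul_sum_sdiff_le T (fun j => sq_nonneg _) hν fun j hj => (hout j hj).le
    _ ≤ 4 * γ := hspec ▸ hquad

theorem stmt13 {n d t : ℕ} (G : SimpleGraph (Fin n)) [DecidableRel G.Adj]
    (hreg : G.IsRegularOfDegree d) (hd : 0 < d)
    (γ lam : ℝ) (hγ0 : 0 < γ) (hγ1 : γ < 1 / 4) (hlam0 : 0 < lam) (hlam1 : lam < 1)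
    (I : Finset (Fin n)) (hind : ∀ x ∈ I, ∀ y ∈ I, ¬ G.Adj x y)
    (hIcard : (I.card : ℝ) = (1 / 2 - γ) * n)
    (w : Fin n → Fin n → ℝ) (ν : Fin n → ℝ)
    (hortho : ∀ i j, w i ⬝ᵥ w j = if i = j then 1 else 0)
    (heig : ∀ j, ((d : ℝ)⁻¹ • G.adjMatrix ℝ).mulVec (w j) = ν j • w j)
    (T : Finset (Fin n)) (hT : T.card = t)
    (hout : ∀ j ∉ T, -lam < ν j)
    (u : Fin n → ℝ)
    (hu : u = fun x => if x ∈ I then 1 / Real.sqrt n else -(1 / Real.sqrt n))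
    (P : Matrix (Fin n) (Fin n) ℝ)
    (hP : P = ∑ j ∈ T, Matrix.vecMulVec (w j) (w j)) :
    (u - P.mulVec u) ⬝ᵥ (u - P.mulVec u) ≤ 4 * γ / (1 - lam) :=
  stmt13_general G hreg hd γ lam hγ0 hlam1 I hind hIcard w ν hortho heig T hout u hu P hP
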